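/- arXiv:1312.3306 — 3 statements merged into one kernel-verified Lean document; each statement's English description precedes it below -/
import Mathlib

section
/- Let (X_n) be i.i.d. with E[X] = -a < 0 and S_n the associated random walk. Then \sum_{k=1}^{\infty} P(L_k \ge 0) < \infty, where L_k = \min(S_1,...,S_k). -/
/-!
Truncate the increments from below at `-C`, with `C` so large that they keep a negative mean
`-b`; this only raises the walk, so it suffices to treat the truncated walk. Stop it at the first
time `τ` it becomes negative. Up to `τ` the walk is nonnegative and the step at `τ` is at least
`-C`, so `S_{τ ∧ n} ≥ -C`. On the other hand `{τ > k}` only depends on the first `k` increments,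
so by independence `E S_{τ ∧ n} = -b ∑_{k < n} P(τ > k)`. Hence the partial sums of
`P(L_k ≥ 0) = P(τ > k)` are bounded by `C / b`.
-/

open MeasureTheory ProbabilityTheory Filter Set Asymptotics

noncomputable section

/-- Partial sums `S n = X 1 + ... + X n` (increments indexed from 1). -/
def walkSum {Ω : Type*} (X : ℕ → Ω → ℝ) (n : ℕ) (ω : Ω) : ℝ :=
  ∑ i ∈ Finset.Icc 1 n, X i ω

/-- Running minimum `L n = min (S 1, ..., S n)`. -/
def walkMin {Ω : Type*} (X : ℕ → Ω → ℝ) (n : ℕ) (ω : Ω) : ℝ :=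
  sInf ((fun k => walkSum X k ω) '' Set.Icc 1 n)

/-- Running maximum `M n = max (S 1, ..., S n)`. -/
def walkMax {Ω : Type*} (X : ℕ → Ω → ℝ) (n : ℕ) (ω : Ω) : ℝ :=
  sSup ((fun k => walkSum X k ω) '' Set.Icc 1 n)

/-- The increments are i.i.d. -/
def IsIIDWalk {Ω : Type*} [MeasurableSpace Ω] (μ : Measure Ω) (X : ℕ → Ω → ℝ) : Prop :=
  (∀ i, Measurable (X i)) ∧ iIndepFun X μ ∧
    ∀ i, IdentDistrib (X i) (X 1) μ μ

/-- `l` is slowly varying at infinity. -/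
def SlowlyVarying (l : ℝ → ℝ) : Prop :=
  (∀ᶠ x in atTop, 0 < l x) ∧
    ∀ c : ℝ, 0 < c → Tendsto (fun x => l (c * x) / l x) atTop (nhds 1)

/-- `Y` is non-lattice (non-arithmetic) under `μ`. -/
def NonLattice {Ω : Type*} [MeasurableSpace Ω] (μ : Measure Ω) (Y : Ω → ℝ) : Prop :=
  ¬ ∃ c d : ℝ, 0 < d ∧ ∀ᵐ ω ∂μ, ∃ k : ℤ, Y ω = c + k * d

section Pathwise

variable {Ω : Type*} (X : ℕ → Ω → ℝ)

def walkNonnegSet (n : ℕ) : Set Ω := {ω | ∀ k ∈ Finset.Icc 1 n, 0 ≤ walkSum X k ω}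

/-- The walk stopped at `τ ∧ n`, where `τ` is the first time it becomes negative. -/
def stoppedWalk (n : ℕ) (ω : Ω) : ℝ :=
  ∑ k ∈ Finset.range n, (walkNonnegSet X k).indicator (X (k + 1)) ω

variable {X}

@[simp]
lemma walkSum_zero (ω : Ω) : walkSum X 0 ω = 0 := by simp [walkSum]

lemma walkSum_succ (n : ℕ) (ω : Ω) : walkSum X (n + 1) ω = walkSum X n ω + X (n + 1) ω :=
  Finset.sum_Icc_succ_top (Nat.le_add_left 1 n) _

lemma walkSum_le_walkSum {Y : ℕ → Ω → ℝ} {ω : Ω} (h : ∀ i, X i ω ≤ Y i ω) (n : ℕ) :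
    walkSum X n ω ≤ walkSum Y n ω :=
  Finset.sum_le_sum fun i _ => h i

lemma walkNonnegSet_subset_walkNonnegSet {Y : ℕ → Ω → ℝ} (h : ∀ i ω, X i ω ≤ Y i ω) (n : ℕ) :
    walkNonnegSet X n ⊆ walkNonnegSet Y n :=
  fun ω hω k hk => (hω k hk).trans (walkSum_le_walkSum (h · ω) k)

lemma mem_walkNonnegSet_succ {n : ℕ} {ω : Ω} :
    ω ∈ walkNonnegSet X (n + 1) ↔ ω ∈ walkNonnegSet X n ∧ 0 ≤ walkSum X (n + 1) ω := by
  simp only [walkNonnegSet, Set.mem_ofPred_eq]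
  rw [← Finset.insert_Icc_right_eq_Icc_add_one (Nat.le_add_left 1 n), Finset.forall_mem_insert,
    and_comm]

lemma walkSum_nonneg_of_mem_walkNonnegSet {n : ℕ} {ω : Ω} (hω : ω ∈ walkNonnegSet X n) :
    0 ≤ walkSum X n ω := by
  cases n with
  | zero => simp
  | succ n => exact (mem_walkNonnegSet_succ.1 hω).2

lemma setOf_walkMin_nonneg (n : ℕ) : {ω | walkMin X n ω ≥ 0} = walkNonnegSet X n := by
  ext ω
  rcases Nat.eq_zero_or_pos n with rfl | hn
  · simp [walkMin, walkNonnegSet]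
  have hne : ((fun k => walkSum X k ω) '' Set.Icc 1 n).Nonempty := ⟨_, 1, ⟨le_rfl, hn⟩, rfl⟩
  simp only [walkMin, walkNonnegSet, ge_iff_le, Set.mem_ofPred_eq,
    le_csInf_iff ((Set.finite_Icc 1 n).image _).bddBelow hne, Set.forall_mem_image, Finset.mem_Icc,
    Set.mem_Icc]

lemma stoppedWalk_succ (n : ℕ) (ω : Ω) :
    stoppedWalk X (n + 1) ω = stoppedWalk X n ω + (walkNonnegSet X n).indicator (X (n + 1)) ω :=
  Finset.sum_range_succ _ _

lemma stoppedWalk_eq_walkSum {n : ℕ} {ω : Ω} (hω : ω ∈ walkNonnegSet X n) :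
    stoppedWalk X n ω = walkSum X n ω := by
  induction n with
  | zero => simp [stoppedWalk]
  | succ n ih =>
    have hω' := (mem_walkNonnegSet_succ.1 hω).1
    rw [stoppedWalk_succ, ih hω', Set.indicator_of_mem hω', walkSum_succ]

lemma neg_le_stoppedWalk {C : ℝ} (hC : 0 ≤ C) {ω : Ω} (hX : ∀ i, -C ≤ X i ω) (n : ℕ) :
    -C ≤ stoppedWalk X n ω := by
  induction n with
  | zero => simpa [stoppedWalk] using hC
  | succ n ih =>
    rw [stoppedWalk_succ]
    by_cases hω : ω ∈ walkNonnegSet X n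
    · rw [stoppedWalk_eq_walkSum hω, Set.indicator_of_mem hω]
      linarith [walkSum_nonneg_of_mem_walkNonnegSet hω, hX (n + 1)]
    · rwa [Set.indicator_of_notMem hω, add_zero]

end Pathwise

section Independent

variable {Ω : Type*} [MeasurableSpace Ω] {μ : Measure Ω} {X : ℕ → Ω → ℝ}

lemma measurableSet_walkNonnegSet (hX : ∀ i, StronglyMeasurable (X i)) (n : ℕ) :
    MeasurableSet[Filtration.natural X hX n] (walkNonnegSet X n) := by
  have hsum : ∀ k ≤ n, Measurable[Filtration.natural X hX n] (walkSum X k) := fun k hk =>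
    Finset.measurable_sum _ fun i hi =>
      ((Filtration.stronglyAdapted_natural hX i).mono
        (Filtration.mono _ ((Finset.mem_Icc.1 hi).2.trans hk))).measurable
  simp only [walkNonnegSet, Set.ofPred_forall]
  exact MeasurableSet.biInter (Finset.countable_toSet _) fun k hk =>
    measurableSet_le measurable_const (hsum k (Finset.mem_Icc.1 hk).2)

lemma integral_indicator_walkNonnegSet (hX : ∀ i, StronglyMeasurable (X i))
    (hI : iIndepFun X μ) (n : ℕ) :
    ∫ ω, (walkNonnegSet X n).indicator (X (n + 1)) ω ∂μ
      = μ.real (walkNonnegSet X n) * ∫ ω, X (n + 1) ω ∂μ := by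
  rw [integral_indicator (Filtration.le _ n _ (measurableSet_walkNonnegSet hX n))]
  exact Indep.setIntegral_eq_mul (f := id) (Filtration.le _ n)
    (hI.indep_comap_natural_of_lt hX n.lt_succ_self).symm (hX _).measurable.aemeasurable
    (measurableSet_walkNonnegSet hX n) aestronglyMeasurable_id

lemma integrable_indicator_walkNonnegSet (hX : ∀ i, StronglyMeasurable (X i))
    (hint : ∀ i, Integrable (X i) μ) (n : ℕ) :
    Integrable ((walkNonnegSet X n).indicator (X (n + 1))) μ :=
  (hint (n + 1)).indicator (Filtration.le _ n _ (measurableSet_walkNonnegSet hX n))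

lemma integrable_stoppedWalk (hX : ∀ i, StronglyMeasurable (X i))
    (hint : ∀ i, Integrable (X i) μ) (n : ℕ) : Integrable (stoppedWalk X n) μ :=
  integrable_finsetSum _ fun k _ => integrable_indicator_walkNonnegSet hX hint k

lemma integral_stoppedWalk (hX : ∀ i, StronglyMeasurable (X i)) (hI : iIndepFun X μ)
    (hint : ∀ i, Integrable (X i) μ) (n : ℕ) :
    ∫ ω, stoppedWalk X n ω ∂μ
      = ∑ k ∈ Finset.range n, μ.real (walkNonnegSet X k) * ∫ ω, X (k + 1) ω ∂μ := by
  simp only [stoppedWalk]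
  rw [integral_finsetSum _ fun k _ => integrable_indicator_walkNonnegSet hX hint k]
  exact Finset.sum_congr rfl fun k _ => integral_indicator_walkNonnegSet hX hI k

lemma mul_sum_measureReal_walkNonnegSet_le
    (hX : ∀ i, StronglyMeasurable (X i)) (hI : iIndepFun X μ) (hint : ∀ i, Integrable (X i) μ)
    {b C : ℝ} (hC : 0 ≤ C) (hXC : ∀ i ω, -C ≤ X i ω) (hb : ∀ i, ∫ ω, X (i + 1) ω ∂μ ≤ -b)
    (n : ℕ) :
    b * ∑ k ∈ Finset.range n, μ.real (walkNonnegSet X k) ≤ C := by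
  have := hI.isProbabilityMeasure
  have hlower : -C ≤ ∫ ω, stoppedWalk X n ω ∂μ := by
    simpa using integral_mono (integrable_const (-C)) (integrable_stoppedWalk hX hint n)
      fun ω => neg_le_stoppedWalk hC (hXC · ω) n
  have hupper : ∫ ω, stoppedWalk X n ω ∂μ
      ≤ -(b * ∑ k ∈ Finset.range n, μ.real (walkNonnegSet X k)) := by
    rw [integral_stoppedWalk hX hI hint, Finset.mul_sum, ← Finset.sum_neg_distrib]
    exact Finset.sum_le_sum fun k _ => by
      nlinarith [hb k, measureReal_nonneg (μ := μ) (s := walkNonnegSet X k)]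
  linarith

lemma summable_measureReal_walkNonnegSet
    (hX : ∀ i, StronglyMeasurable (X i)) (hI : iIndepFun X μ) (hint : ∀ i, Integrable (X i) μ)
    {b C : ℝ} (hb : 0 < b) (hC : 0 ≤ C) (hXC : ∀ i ω, -C ≤ X i ω)
    (hXb : ∀ i, ∫ ω, X (i + 1) ω ∂μ ≤ -b) :
    Summable fun n => μ.real (walkNonnegSet X n) :=
  summable_of_sum_range_le (c := C / b) (fun _ => measureReal_nonneg) fun n =>
    (le_div_iff₀' hb).2 (mul_sum_measureReal_walkNonnegSet_le hX hI hint hC hXC hXb n)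

end Independent

lemma tendsto_integral_max_neg_natCast {Ω : Type*} [MeasurableSpace Ω] {μ : Measure Ω}
    {f : Ω → ℝ} (hf : Integrable f μ) :
    Tendsto (fun C : ℕ => ∫ ω, max (f ω) (-C) ∂μ) atTop (nhds (∫ ω, f ω ∂μ)) := by
  refine tendsto_integral_of_dominated_convergence (fun ω => |f ω|)
    (fun C => hf.aestronglyMeasurable.sup aestronglyMeasurable_const) hf.abs
    (fun C => ae_of_all _ fun ω => ?_) (ae_of_all _ fun ω => ?_)
  · rcases le_total (-(C : ℝ)) (f ω) with h | h
    · rw [max_eq_left h, Real.norm_eq_abs]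
    · rw [max_eq_right h, norm_neg, Real.norm_natCast]
      linarith [neg_abs_le (f ω)]
  · refine tendsto_const_nhds.congr' ((eventually_ge_atTop ⌈-f ω⌉₊).mono fun C hC => ?_)
    have : -f ω ≤ C := (Nat.le_ceil _).trans (Nat.cast_le.2 hC)
    exact (max_eq_left (by linarith)).symm

/-- for a random walk with negative drift,
`∑_{k ≥ 1} P(L_k ≥ 0) < ∞`. -/
theorem summable_prob_min_nonneg {Ω : Type*} [MeasurableSpace Ω] (μ : Measure Ω)
    [IsProbabilityMeasure μ] (X : ℕ → Ω → ℝ) (hiid : IsIIDWalk μ X)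
    (a : ℝ) (ha : 0 < a) (hint : Integrable (X 1) μ) (hmean : μ[X 1] = -a) :
    Summable (fun k : ℕ => (μ {ω | walkMin X (k + 1) ω ≥ 0}).toReal) := by
  obtain ⟨hXm, hXI, hXid⟩ := hiid
  obtain ⟨C, hC⟩ := ((tendsto_integral_max_neg_natCast hint).eventually_lt_const
    (show ∫ ω, X 1 ω ∂μ < 0 by linarith)).exists
  set Y : ℕ → Ω → ℝ := fun i ω => max (X i ω) (-C)
  have hmax : Measurable fun x : ℝ => max x (-C) := measurable_id.max measurable_const
  have hYid : ∀ i, IdentDistrib (Y i) (Y 1) μ μ := fun i => (hXid i).comp hmax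
  have hY : Summable fun k => μ.real (walkNonnegSet Y k) :=
    summable_measureReal_walkNonnegSet
      (fun i => ((hXm i).max measurable_const).stronglyMeasurable)
      (hXI.comp (fun _ x => max x (-C)) fun _ => hmax)
      (fun i => (hYid i).integrable_iff.2 (hint.sup (integrable_const _)))
      (neg_pos.2 hC) (Nat.cast_nonneg C) (fun _ _ => le_max_right _ _)
      (fun i => ((hYid (i + 1)).integral_eq.trans (neg_neg _).symm).le)
  refine ((summable_nat_add_iff 1).2 hY).of_nonneg_of_le (fun _ => ENNReal.toReal_nonneg)
    fun k => ?_
  rw [← measureReal_def, setOf_walkMin_nonneg]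
  exact measureReal_mono (walkNonnegSet_subset_walkNonnegSet (fun _ _ => le_max_left _ _) _)
end
end

section
/- Let A(x) = l(x)/x^{\beta} with l slowly varying and \beta > 2. If for every fixed \Delta > 0 one has x\,[l(x+\Delta)/l(x) - 1] \to 0 as x \to \infty, then for every \Delta > 0, A(x) - A(x+\Delta) = (\Delta \beta A(x)/x)(1 + o(1)) as x \to \infty. -/
open MeasureTheory ProbabilityTheory Filter Set Asymptotics

noncomputable section

open Topology

/-! With `r x = l (x + Δ) / l x` and `p x = (1 + Δ / x) ^ (-β) = (x / (x + Δ)) ^ β`, one has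
`A x - A (x + Δ) = (A x / x) * (x * (1 - p x) - x * (r x - 1) * p x)`. The first term tends to
`Δ * β` because `p` is differentiable at the origin as a function of `Δ / x`, with derivative `-β`;
the second tends to `0 * 1` by the hypothesis on `l`. -/

theorem HasDerivAt.tendsto_mul_sub_div_atTop {f : ℝ → ℝ} {f' : ℝ} (hf : HasDerivAt f f' 0)
    (c : ℝ) : Tendsto (fun x => x * (f (c / x) - f 0)) atTop (𝓝 (c * f')) := by
  rcases eq_or_ne c 0 with rfl | hc
  · simp
  have hcx : Tendsto (fun x : ℝ => c / x) atTop (𝓝[≠] 0) := by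
    refine tendsto_nhdsWithin_iff.mpr ⟨tendsto_const_nhds.div_atTop tendsto_id, ?_⟩
    filter_upwards [eventually_gt_atTop 0] with x hx using div_ne_zero hc hx.ne'
  refine ((hasDerivAt_iff_tendsto_slope.mp hf).comp hcx).const_mul c |>.congr' ?_
  filter_upwards [eventually_gt_atTop 0] with x hx
  simp only [Function.comp_apply, slope_def_field, sub_zero]
  field_simp

theorem tendsto_mul_one_sub_one_add_div_rpow_neg (c β : ℝ) :
    Tendsto (fun x : ℝ => x * (1 - (1 + c / x) ^ (-β))) atTop (𝓝 (c * β)) := by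
  have hderiv : HasDerivAt (fun u : ℝ => (1 + u) ^ (-β)) (-β) 0 := by
    simpa using ((hasDerivAt_id (0 : ℝ)).const_add 1).rpow_const (p := -β) (by simp)
  convert (hderiv.tendsto_mul_sub_div_atTop c).neg using 1
  · ext x
    simp only [add_zero, Real.one_rpow]
    ring
  · ring_nf

theorem sub_div_rpow_add_eq {a b β Δ x : ℝ} (hx : 0 < x) (hxΔ : 0 < x + Δ) (ha : a ≠ 0) :
    a / x ^ β - b / (x + Δ) ^ β =
      a / x ^ β / x * (x * (1 - (1 + Δ / x) ^ (-β)) - x * (b / a - 1) * (1 + Δ / x) ^ (-β)) := by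
  have hpow : (1 + Δ / x) ^ (-β) = x ^ β / (x + Δ) ^ β := by
    rw [show 1 + Δ / x = (x + Δ) / x by field_simp, Real.rpow_neg (by positivity),
      Real.div_rpow hxΔ.le hx.le, inv_div]
  have : 0 < x ^ β := by positivity
  have : 0 < (x + Δ) ^ β := by positivity
  rw [hpow]
  field_simp
  ring

theorem isEquivalent_sub_div_rpow_add {l : ℝ → ℝ} {β Δ : ℝ} (hβ : β ≠ 0) (hΔ : Δ ≠ 0)
    (hl : ∀ᶠ x in atTop, l x ≠ 0)
    (hrem : Tendsto (fun x => x * (l (x + Δ) / l x - 1)) atTop (𝓝 0)) :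
    (fun x => l x / x ^ β - l (x + Δ) / (x + Δ) ^ β) ~[atTop]
      fun x => Δ * β * (l x / x ^ β) / x := by
  have hpow : Tendsto (fun x : ℝ => (1 + Δ / x) ^ (-β)) atTop (𝓝 1) := by
    simpa using ((tendsto_const_nhds.div_atTop tendsto_id).const_add 1).rpow_const
      (p := -β) (by simp)
  have hfactor : Tendsto (fun x => x * (1 - (1 + Δ / x) ^ (-β)) -
      x * (l (x + Δ) / l x - 1) * (1 + Δ / x) ^ (-β)) atTop (𝓝 (Δ * β)) := by
    simpa using (tendsto_mul_one_sub_one_add_div_rpow_neg Δ β).sub (hrem.mul hpow)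
  have hprod := (IsEquivalent.refl (u := fun x => l x / x ^ β / x) (l := atTop)).mul
    ((isEquivalent_const_iff_tendsto (mul_ne_zero hΔ hβ)).mpr hfactor)
  refine (hprod.congr_left ?_).congr_right ?_
  · filter_upwards [eventually_gt_atTop 0, eventually_gt_atTop (-Δ), hl] with x hx hxΔ hlx
    exact (sub_div_rpow_add_eq hx (by linarith) hlx).symm
  · filter_upwards with x
    simp only [Pi.mul_apply, Function.const_apply]
    ring

/-- local tail asymptotics from the slow-variation remainder
condition. -/
theorem local_tail_asymptotics (l : ℝ → ℝ) (hl : SlowlyVarying l)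
    (β : ℝ) (hβ : 2 < β) (A : ℝ → ℝ) (hA : ∀ x : ℝ, 0 < x → A x = l x / x ^ β)
    (hrem : ∀ Δ : ℝ, 0 < Δ →
      Tendsto (fun x => x * (l (x + Δ) / l x - 1)) atTop (nhds 0)) :
    ∀ Δ : ℝ, 0 < Δ →
      (fun x => A x - A (x + Δ)) ~[atTop] (fun x => Δ * β * A x / x) := by
  intro Δ hΔ
  have hequiv := isEquivalent_sub_div_rpow_add (by linarith : (0 : ℝ) < β).ne' hΔ.ne'
    (hl.1.mono fun _ => ne_of_gt) (hrem Δ hΔ)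
  refine (hequiv.congr_left ?_).congr_right ?_
  · filter_upwards [eventually_gt_atTop 0] with x hx
    rw [hA x hx, hA (x + Δ) (by linarith)]
  · filter_upwards [eventually_gt_atTop 0] with x hx
    rw [hA x hx]
end
end

section
/- Let S_n be a random walk with i.i.d. increments X_i, E[X] = -a < 0, Var(X) = \sigma^2 < \infty, and P(X \in (x,x+\Delta]) \le C\Delta P(X>x)/x for x large, with P(X>x) regularly varying of index -\beta, \beta>2. Set b_n = \beta P(X>an)/(an). For fixed K > 0 and \delta \in (0,1) define R_\delta(M,K) = { \delta a n \le X_1 \le an - M\sqrt{n}, |S_n| \le K } and R(M,K) = { X_1 \ge an + M\sqrt{n}, |S_n| \le K }. Then \lim_{M\to\infty} \limsup_{n\to\infty} b_n^{-1} P( R_\delta(M,K) \cup R(M,K) ) = 0. -/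
open MeasureTheory ProbabilityTheory Filter Set Asymptotics

noncomputable section

/-!
Write `S n = X 1 + S'` with `S' = X 2 + ⋯ + X n` independent of `X 1`. On the event, `X 1` exceeds
`δan/2` and `S'` deviates from its mean `-(n-1)a` by at least `M√n - a - K`. Given `S'`, the jump
`X 1` is confined to an interval of length `2K` beyond `δan/2`, which the local tail bound and
regular variation make of probability `O(P(X > an)/(an)) = O(b n)`; Chebyshev bounds the deviation
of `S'` by `O(M⁻²)`. So `(b n)⁻¹ P(…) = O(M⁻²)` for all large `n`.
-/

section UnitWindows

variable {ν : Measure ℝ} {x₀ : ℝ} {p : ENNReal}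

lemma measure_Ioc_add_natCast_le (hp : ∀ x, x₀ ≤ x → ν (Ioc x (x + 1)) ≤ p) {s : ℝ}
    (hs : x₀ ≤ s) (N : ℕ) : ν (Ioc s (s + N)) ≤ N * p := by
  induction N with
  | zero => simp
  | succ N ih =>
    have hsplit : Ioc s (s + ↑(N + 1)) = Ioc s (s + N) ∪ Ioc (s + N) (s + N + 1) := by
      rw [Ioc_union_Ioc_eq_Ioc (by simp) (by simp), Nat.cast_succ, add_assoc]
    calc ν (Ioc s (s + ↑(N + 1))) ≤ ν (Ioc s (s + N)) + ν (Ioc (s + N) (s + N + 1)) :=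
          hsplit ▸ measure_union_le _ _
      _ ≤ N * p + p := add_le_add ih (hp _ (le_add_of_le_of_nonneg hs N.cast_nonneg))
      _ = ↑(N + 1) * p := by push_cast; ring

lemma measure_Ioi_inter_Icc_le (hp : ∀ x, x₀ ≤ x → ν (Ioc x (x + 1)) ≤ p) (c L : ℝ) :
    ν (Ioi x₀ ∩ Icc c (c + L)) ≤ (⌈L⌉₊ + 1) * p := by
  set s := max x₀ (c - 1)
  have hsub : Ioi x₀ ∩ Icc c (c + L) ⊆ Ioc s (s + ↑(⌈L⌉₊ + 1)) := by
    rintro y ⟨hy₀, hyc, hyL⟩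
    have := Nat.le_ceil L
    have := le_max_right x₀ (c - 1)
    exact ⟨max_lt hy₀ (by linarith), by push_cast; linarith⟩
  calc ν (Ioi x₀ ∩ Icc c (c + L)) ≤ ν (Ioc s (s + ↑(⌈L⌉₊ + 1))) := measure_mono hsub
    _ ≤ ↑(⌈L⌉₊ + 1) * p := measure_Ioc_add_natCast_le hp (le_max_left _ _) _
    _ = (⌈L⌉₊ + 1) * p := by norm_cast

end UnitWindows

lemma measure_gt_and_abs_add_le_le {Ω : Type*} [MeasurableSpace Ω] {μ : Measure Ω}
    [IsFiniteMeasure μ] {Y Z : Ω → ℝ} (hY : Measurable Y) (hZ : Measurable Z)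
    (hYZ : IndepFun Y Z μ) {x₀ : ℝ} {p : ENNReal}
    (hp : ∀ x, x₀ ≤ x → μ (Y ⁻¹' Ioc x (x + 1)) ≤ p) {D : Set ℝ} (hD : MeasurableSet D)
    (K : ℝ) :
    μ {ω | x₀ < Y ω ∧ Z ω ∈ D ∧ |Y ω + Z ω| ≤ K}
      ≤ (⌈2 * K⌉₊ + 1) * p * μ (Z ⁻¹' D) := by
  set S : Set (ℝ × ℝ) := {q | x₀ < q.1 ∧ q.2 ∈ D ∧ |q.1 + q.2| ≤ K}
  have hS : MeasurableSet S := by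
    have : Measurable fun q : ℝ × ℝ => |q.1 + q.2| := by fun_prop
    exact (measurableSet_lt measurable_const measurable_fst).inter
      ((measurable_snd hD).inter (measurableSet_le this measurable_const))
  have hlaw : μ.map (fun ω => (Y ω, Z ω)) = (μ.map Y).prod (μ.map Z) :=
    (indepFun_iff_map_prod_eq_prod_map_map hY.aemeasurable hZ.aemeasurable).1 hYZ
  have hpY : ∀ x, x₀ ≤ x → μ.map Y (Ioc x (x + 1)) ≤ p := fun x hx => by
    rw [Measure.map_apply hY measurableSet_Ioc]; exact hp x hx
  have hslice : ∀ z, μ.map Y ((fun y => (y, z)) ⁻¹' S)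
      ≤ D.indicator (fun _ => (⌈2 * K⌉₊ + 1) * p) z := by
    intro z
    by_cases hz : z ∈ D
    · have hset : (fun y => (y, z)) ⁻¹' S = Ioi x₀ ∩ Icc (-K - z) (-K - z + 2 * K) := by
        ext y
        simp only [S, mem_preimage, mem_ofPred_eq, mem_inter_iff, mem_Ioi, mem_Icc, abs_le, hz,
          true_and]
        constructor <;> rintro ⟨h₀, h₁, h₂⟩ <;> exact ⟨h₀, by linarith, by linarith⟩
      rw [indicator_of_mem hz, hset]
      exact measure_Ioi_inter_Icc_le hpY _ _
    · have hset : (fun y => (y, z)) ⁻¹' S = ∅ := by ext y; simp [S, hz]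
      simp [hset]
  calc μ {ω | x₀ < Y ω ∧ Z ω ∈ D ∧ |Y ω + Z ω| ≤ K}
      = (μ.map Y).prod (μ.map Z) S := by rw [← hlaw, Measure.map_apply (by fun_prop) hS]; rfl
    _ = ∫⁻ z, μ.map Y ((fun y => (y, z)) ⁻¹' S) ∂μ.map Z := Measure.prod_apply_symm hS
    _ ≤ ∫⁻ z, D.indicator (fun _ => (⌈2 * K⌉₊ + 1) * p) z ∂μ.map Z := lintegral_mono hslice
    _ = (⌈2 * K⌉₊ + 1) * p * μ (Z ⁻¹' D) := by
      rw [lintegral_indicator_const hD, Measure.map_apply hZ hD]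

lemma measure_le_abs_sum_sub_integral_le {Ω ι : Type*} [MeasurableSpace Ω] {μ : Measure Ω}
    [IsFiniteMeasure μ] {X : ι → Ω → ℝ} (hX : Pairwise fun i j => IndepFun (X i) (X j) μ)
    (hX2 : ∀ i, MemLp (X i) 2 μ) {V : ℝ} (hV : ∀ i, variance (X i) μ = V) (s : Finset ι)
    {r : ℝ} (hr : 0 < r) :
    μ {ω | r ≤ |∑ i ∈ s, X i ω - ∑ i ∈ s, μ[X i]|} ≤ ENNReal.ofReal (s.card * V / r ^ 2) := by
  have hvar : variance (∑ i ∈ s, X i) μ = s.card * V := by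
    rw [IndepFun.variance_sum (fun i _ => hX2 i) (fun i _ j _ hij => hX hij)]
    simp [hV]
  have hmean : μ[∑ i ∈ s, X i] = ∑ i ∈ s, μ[X i] := by
    simpa only [Finset.sum_apply] using
      integral_finsetSum s fun i _ => (hX2 i).integrable one_le_two
  have h := meas_ge_le_variance_div_sq (memLp_finsetSum' s fun i _ => hX2 i) hr
  rw [hvar, hmean] at h
  simpa only [Finset.sum_apply] using h

lemma walkSum_eq_add_sum_Ioc {Ω : Type*} (X : ℕ → Ω → ℝ) {n : ℕ} (hn : 1 ≤ n) (ω : Ω) :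
    walkSum X n ω = X 1 ω + ∑ i ∈ Finset.Ioc 1 n, X i ω :=
  (Finset.add_sum_Ioc_eq_sum_Icc hn).symm

/-- The event `R_δ(M,K) ∪ R(M,K)`. -/
def bigJumpEvent {Ω : Type*} (X : ℕ → Ω → ℝ) (a δ K M : ℝ) (n : ℕ) : Set Ω :=
  {ω | ((δ * a * n ≤ X 1 ω ∧ X 1 ω ≤ a * n - M * Real.sqrt n) ∨
    X 1 ω ≥ a * n + M * Real.sqrt n) ∧ |walkSum X n ω| ≤ K}

lemma bigJumpEvent_subset {Ω : Type*} (X : ℕ → Ω → ℝ) {a δ : ℝ} (ha : 0 < a) (hδ0 : 0 < δ)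
    (hδ1 : δ < 1) (K : ℝ) {M : ℝ} (hM : 0 ≤ M) {n : ℕ} (hn : 1 ≤ n) :
    bigJumpEvent X a δ K M n ⊆ {ω | δ / 2 * (a * n) < X 1 ω ∧
      M * Real.sqrt n - a - K ≤ |∑ i ∈ Finset.Ioc 1 n, X i ω + (a * n - a)| ∧
      |X 1 ω + ∑ i ∈ Finset.Ioc 1 n, X i ω| ≤ K} := by
  have hu : 0 < a * n := mul_pos ha (by exact_mod_cast hn)
  have ht : 0 ≤ M * Real.sqrt n := by positivity
  rintro ω ⟨hjump, hK⟩
  rw [walkSum_eq_add_sum_Ioc X hn] at hK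
  obtain ⟨hK₁, hK₂⟩ := abs_le.1 hK
  refine ⟨?_, le_abs.2 ?_, hK⟩
  · rcases hjump with ⟨h, -⟩ | h <;> nlinarith
  · rcases hjump with ⟨-, h⟩ | h
    · left; linarith
    · right; linarith

lemma measure_le_abs_sum_Ioc_add_le {Ω : Type*} [MeasurableSpace Ω] {μ : Measure Ω}
    [IsProbabilityMeasure μ] {X : ℕ → Ω → ℝ} (hiid : IsIIDWalk μ X) {a : ℝ}
    (hmean : μ[X 1] = -a) (hX2 : MemLp (X 1) 2 μ) {M r : ℝ} (hM : 0 < M) {n : ℕ} (hn : 1 ≤ n)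
    (hr : M * Real.sqrt n / 2 ≤ r) :
    μ {ω | r ≤ |∑ i ∈ Finset.Ioc 1 n, X i ω + (a * n - a)|}
      ≤ ENNReal.ofReal (4 * variance (X 1) μ / M ^ 2) := by
  obtain ⟨-, hindep, hident⟩ := hiid
  have hES : ∑ i ∈ Finset.Ioc 1 n, μ[X i] = -(a * n - a) := by
    simp only [fun i => (hident i).integral_eq, hmean, Finset.sum_const, Nat.card_Ioc,
      nsmul_eq_mul, Nat.cast_sub hn]
    ring
  have hr2 : M ^ 2 * n / 4 ≤ r ^ 2 := by
    have := pow_le_pow_left₀ (by positivity) hr 2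
    rw [div_pow, mul_pow, Real.sq_sqrt (Nat.cast_nonneg n)] at this
    linarith
  have hcheb := measure_le_abs_sum_sub_integral_le (fun i j hij => hindep.indepFun hij)
    (fun i => (hident i).symm.memLp_snd hX2) (fun i => (hident i).variance_eq) (Finset.Ioc 1 n)
    (lt_of_lt_of_le (by positivity) hr)
  rw [hES] at hcheb
  simp only [sub_neg_eq_add] at hcheb
  refine hcheb.trans (ENNReal.ofReal_le_ofReal ?_)
  have hcard : ((Finset.Ioc 1 n).card : ℝ) ≤ n := by simp
  have hV := variance_nonneg (X 1) μ
  calc (Finset.Ioc 1 n).card * variance (X 1) μ / r ^ 2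
      ≤ n * variance (X 1) μ / (M ^ 2 * n / 4) := by gcongr
    _ = 4 * variance (X 1) μ / M ^ 2 := by field_simp

lemma measure_bigJumpEvent_le {Ω : Type*} [MeasurableSpace Ω] {μ : Measure Ω}
    [IsProbabilityMeasure μ] {X : ℕ → Ω → ℝ} (hiid : IsIIDWalk μ X) {a : ℝ} (ha : 0 < a)
    (hmean : μ[X 1] = -a) (hX2 : MemLp (X 1) 2 μ) {δ : ℝ} (hδ0 : 0 < δ) (hδ1 : δ < 1)
    (K : ℝ) {M : ℝ} (hM : 0 < M) {n : ℕ} (hn : 1 ≤ n)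
    (hdev : M * Real.sqrt n / 2 ≤ M * Real.sqrt n - a - K) {q : ℝ} (hq : 0 ≤ q)
    (hp : ∀ x, δ / 2 * (a * n) ≤ x → μ (X 1 ⁻¹' Ioc x (x + 1)) ≤ ENNReal.ofReal q) :
    (μ (bigJumpEvent X a δ K M n)).toReal
      ≤ (⌈2 * K⌉₊ + 1) * q * (4 * variance (X 1) μ / M ^ 2) := by
  obtain ⟨hmeas, hindep, -⟩ := id hiid
  set S : Ω → ℝ := fun ω => ∑ i ∈ Finset.Ioc 1 n, X i ω
  set D : Set ℝ := {s | M * Real.sqrt n - a - K ≤ |s + (a * n - a)|}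
  have hindepS : IndepFun (X 1) S μ := by
    have := (hindep.indepFun_finsetSum_of_notMem hmeas (by simp : 1 ∉ Finset.Ioc 1 n)).symm
    rwa [Finset.sum_fn] at this
  have hbound : μ (bigJumpEvent X a δ K M n)
      ≤ (⌈2 * K⌉₊ + 1) * ENNReal.ofReal q * ENNReal.ofReal (4 * variance (X 1) μ / M ^ 2) :=
    calc μ (bigJumpEvent X a δ K M n)
        ≤ μ {ω | δ / 2 * (a * n) < X 1 ω ∧ S ω ∈ D ∧ |X 1 ω + S ω| ≤ K} :=
          measure_mono (bigJumpEvent_subset X ha hδ0 hδ1 K hM.le hn)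
      _ ≤ (⌈2 * K⌉₊ + 1) * ENNReal.ofReal q * μ (S ⁻¹' D) :=
          measure_gt_and_abs_add_le_le (hmeas 1) (Finset.measurable_sum _ fun i _ => hmeas i)
            hindepS hp (measurableSet_le measurable_const (measurable_id.add_const _).abs) K
      _ ≤ _ := by gcongr; exact measure_le_abs_sum_Ioc_add_le hiid hmean hX2 hM hn hdev
  have hV := variance_nonneg (X 1) μ
  refine ENNReal.toReal_le_of_le_ofReal (by positivity) (hbound.trans_eq ?_)
  rw [ENNReal.ofReal_mul (by positivity), ENNReal.ofReal_mul (by positivity)]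
  norm_cast

lemma measure_preimage_Ioc_le_of_local_tail {Ω : Type*} [MeasurableSpace Ω] {μ : Measure Ω}
    [IsFiniteMeasure μ] {Y : Ω → ℝ} {C x₁ x₀ : ℝ} (hC : 0 ≤ C) (hx₁ : x₁ ≤ x₀) (hx₀ : 0 < x₀)
    (hloc : ∀ x, x₁ ≤ x → ∀ Δ : ℝ, 0 < Δ →
      (μ {ω | x < Y ω ∧ Y ω ≤ x + Δ}).toReal ≤ C * Δ * (μ {ω | Y ω > x}).toReal / x)
    (x : ℝ) (hx : x₀ ≤ x) :
    μ (Y ⁻¹' Ioc x (x + 1)) ≤ ENNReal.ofReal (C * (μ {ω | Y ω > x₀}).toReal / x₀) := by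
  have htail : (μ {ω | Y ω > x}).toReal ≤ (μ {ω | Y ω > x₀}).toReal :=
    ENNReal.toReal_mono (measure_ne_top _ _) (measure_mono fun ω (h : x < Y ω) => hx.trans_lt h)
  rw [← ENNReal.ofReal_toReal (measure_ne_top μ _)]
  refine ENNReal.ofReal_le_ofReal ((hloc x (hx₁.trans hx) 1 one_pos).trans ?_)
  rw [mul_one]
  gcongr

lemma SlowlyVarying.eventually_le_two_mul {l : ℝ → ℝ} (hl : SlowlyVarying l) {c : ℝ}
    (hc : 0 < c) : ∀ᶠ x in atTop, l (c * x) ≤ 2 * l x := by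
  filter_upwards [(hl.2 c hc).eventually (eventually_le_nhds one_lt_two), hl.1] with x hx hpos
  exact (div_le_iff₀ hpos).1 hx

lemma SlowlyVarying.eventually_le_two_div_rpow_mul {l T : ℝ → ℝ} (hl : SlowlyVarying l) {β : ℝ}
    (hT : ∀ x, 0 < x → T x = l x / x ^ β) {c : ℝ} (hc : 0 < c) :
    ∀ᶠ x in atTop, T (c * x) ≤ 2 / c ^ β * T x := by
  filter_upwards [hl.eventually_le_two_mul hc, eventually_gt_atTop 0] with x hx hx₀
  rw [hT _ (mul_pos hc hx₀), hT x hx₀, Real.mul_rpow hc.le hx₀.le, div_mul_div_comm]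
  gcongr

lemma exists_eventually_inv_mul_measure_bigJumpEvent_le {Ω : Type*} [MeasurableSpace Ω]
    {μ : Measure Ω} [IsProbabilityMeasure μ] {X : ℕ → Ω → ℝ} (hiid : IsIIDWalk μ X) {a : ℝ}
    (ha : 0 < a) (hmean : μ[X 1] = -a) (hX2 : MemLp (X 1) 2 μ) {β : ℝ} (hβ : 0 < β)
    {sv : ℝ → ℝ} (hsv : SlowlyVarying sv)
    (htail : ∀ x : ℝ, 0 < x → (μ {ω | X 1 ω > x}).toReal = sv x / x ^ β) {C : ℝ} (hC : 0 ≤ C)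
    (hloc : ∀ᶠ x in atTop, ∀ Δ : ℝ, 0 < Δ →
      (μ {ω | x < X 1 ω ∧ X 1 ω ≤ x + Δ}).toReal ≤ C * Δ * (μ {ω | X 1 ω > x}).toReal / x)
    {b : ℕ → ℝ} (hb : ∀ n : ℕ, b n = β * (μ {ω | X 1 ω > a * n}).toReal / (a * n))
    (K : ℝ) {δ : ℝ} (hδ0 : 0 < δ) (hδ1 : δ < 1) :
    ∃ c, ∀ M, 0 < M → ∀ᶠ n : ℕ in atTop,
      (b n)⁻¹ * (μ (bigJumpEvent X a δ K M n)).toReal ≤ c / M ^ 2 := by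
  refine ⟨(⌈2 * K⌉₊ + 1) * C * (2 / (δ / 2) ^ β) * (2 / δ) * (4 * variance (X 1) μ) / β,
    fun M hM => ?_⟩
  obtain ⟨x₁, hx₁⟩ := eventually_atTop.1 hloc
  set T : ℝ → ℝ := fun x => (μ {ω | X 1 ω > x}).toReal
  have han : Tendsto (fun n : ℕ => a * n) atTop atTop :=
    tendsto_natCast_atTop_atTop.const_mul_atTop ha
  have hsqrt : Tendsto (fun n : ℕ => M * Real.sqrt n) atTop atTop :=
    (Real.tendsto_sqrt_atTop.comp tendsto_natCast_atTop_atTop).const_mul_atTop hM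
  filter_upwards [eventually_ge_atTop 1,
    (han.const_mul_atTop (half_pos hδ0)).eventually_ge_atTop x₁,
    han.eventually (hsv.eventually_le_two_div_rpow_mul htail (half_pos hδ0)),
    han.eventually hsv.1, hsqrt.eventually_ge_atTop (2 * (a + K))]
    with n hn hx₁n hTn hsvn hdev
  have hu : 0 < a * n := mul_pos ha (by exact_mod_cast hn)
  have hx₀ : 0 < δ / 2 * (a * n) := by positivity
  have hTu : 0 < T (a * n) := by
    simp only [T, htail _ hu]
    positivity
  have hE := measure_bigJumpEvent_le hiid ha hmean hX2 hδ0 hδ1 K hM hn (by linarith)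
    (by positivity) (measure_preimage_Ioc_le_of_local_tail hC hx₁n hx₀ hx₁)
  rw [hb n, inv_div]
  calc a * n / (β * T (a * n)) * (μ (bigJumpEvent X a δ K M n)).toReal
      ≤ a * n / (β * T (a * n)) *
        ((⌈2 * K⌉₊ + 1) * (C * T (δ / 2 * (a * n)) / (δ / 2 * (a * n)))
          * (4 * variance (X 1) μ / M ^ 2)) := by gcongr
    _ ≤ a * n / (β * T (a * n)) *
        ((⌈2 * K⌉₊ + 1) * (C * (2 / (δ / 2) ^ β * T (a * n)) / (δ / 2 * (a * n)))
          * (4 * variance (X 1) μ / M ^ 2)) := by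
      have := variance_nonneg (X 1) μ
      gcongr
    _ = _ := by field_simp

lemma tendsto_limsup_of_nonneg_of_eventually_le {α : Type*} {l : Filter α} {f : α → ℕ → ℝ}
    {g : α → ℝ} (hf : ∀ M n, 0 ≤ f M n) (hg : Tendsto g l (nhds 0))
    (hfg : ∀ᶠ M in l, ∀ᶠ n in atTop, f M n ≤ g M) :
    Tendsto (fun M => limsup (f M) atTop) l (nhds 0) := by
  refine tendsto_of_tendsto_of_tendsto_of_le_of_le' tendsto_const_nhds hg ?_ ?_
  · filter_upwards [hfg] with M hM
    exact le_limsup_of_frequently_le (.of_forall (hf M)) (isBoundedUnder_of_eventually_le hM)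
  · filter_upwards [hfg] with M hM
    exact limsup_le_of_le (isCoboundedUnder_le_of_le atTop (hf M)) hM

theorem big_jump_concentration_general {Ω : Type*} [MeasurableSpace Ω] (μ : Measure Ω)
    [IsProbabilityMeasure μ] (X : ℕ → Ω → ℝ) (hiid : IsIIDWalk μ X)
    (a : ℝ) (ha : 0 < a) (hmean : μ[X 1] = -a)
    (hvar : Integrable (fun ω => (X 1 ω) ^ 2) μ)
    (β : ℝ) (hβ : 2 < β) (sv : ℝ → ℝ) (hsv : SlowlyVarying sv)
    (htail : ∀ x : ℝ, 0 < x → (μ {ω | X 1 ω > x}).toReal = sv x / x ^ β)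
    (hloc : ∃ C : ℝ, 0 < C ∧ ∀ᶠ x in atTop, ∀ Δ : ℝ, 0 < Δ →
      (μ {ω | x < X 1 ω ∧ X 1 ω ≤ x + Δ}).toReal
        ≤ C * Δ * (μ {ω | X 1 ω > x}).toReal / x)
    (b : ℕ → ℝ)
    (hb : ∀ n : ℕ, b n = β * (μ {ω | X 1 ω > a * n}).toReal / (a * n))
    (K : ℝ) (δ : ℝ) (hδ0 : 0 < δ) (hδ1 : δ < 1) :
    Tendsto (fun M : ℝ =>
      limsup (fun n : ℕ => (b n)⁻¹ *
        (μ {ω | ((δ * a * n ≤ X 1 ω ∧ X 1 ω ≤ a * n - M * Real.sqrt n) ∨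
            X 1 ω ≥ a * n + M * Real.sqrt n) ∧ |walkSum X n ω| ≤ K}).toReal) atTop)
      atTop (nhds 0) := by
  obtain ⟨C, hC, hloc⟩ := hloc
  have hX2 : MemLp (X 1) 2 μ :=
    (memLp_two_iff_integrable_sq (hiid.1 1).aestronglyMeasurable).2 hvar
  have hβ0 : 0 < β := by linarith
  have hb0 : ∀ n, 0 ≤ b n := fun n => by rw [hb n]; positivity
  obtain ⟨c, hc⟩ := exists_eventually_inv_mul_measure_bigJumpEvent_le hiid ha hmean hX2 hβ0
    hsv htail hC.le hloc hb K hδ0 hδ1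
  exact tendsto_limsup_of_nonneg_of_eventually_le
    (fun M n => mul_nonneg (inv_nonneg.2 (hb0 n)) ENNReal.toReal_nonneg)
    (tendsto_const_nhds.div_atTop (tendsto_pow_atTop two_ne_zero))
    (eventually_gt_atTop 0 |>.mono hc)

/-- the big jump at time 1 is concentrated in the window
`an ± M√n`. -/
theorem big_jump_concentration {Ω : Type*} [MeasurableSpace Ω] (μ : Measure Ω)
    [IsProbabilityMeasure μ] (X : ℕ → Ω → ℝ) (hiid : IsIIDWalk μ X)
    (a : ℝ) (ha : 0 < a) (hint : Integrable (X 1) μ) (hmean : μ[X 1] = -a)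
    (hvar : Integrable (fun ω => (X 1 ω) ^ 2) μ)
    (β : ℝ) (hβ : 2 < β) (sv : ℝ → ℝ) (hsv : SlowlyVarying sv)
    (htail : ∀ x : ℝ, 0 < x → (μ {ω | X 1 ω > x}).toReal = sv x / x ^ β)
    (hloc : ∃ C : ℝ, 0 < C ∧ ∀ᶠ x in atTop, ∀ Δ : ℝ, 0 < Δ →
      (μ {ω | x < X 1 ω ∧ X 1 ω ≤ x + Δ}).toReal
        ≤ C * Δ * (μ {ω | X 1 ω > x}).toReal / x)
    (b : ℕ → ℝ)
    (hb : ∀ n : ℕ, b n = β * (μ {ω | X 1 ω > a * n}).toReal / (a * n))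
    (K : ℝ) (hK : 0 < K) (δ : ℝ) (hδ0 : 0 < δ) (hδ1 : δ < 1) :
    Tendsto (fun M : ℝ =>
      limsup (fun n : ℕ => (b n)⁻¹ *
        (μ {ω | ((δ * a * n ≤ X 1 ω ∧ X 1 ω ≤ a * n - M * Real.sqrt n) ∨
            X 1 ω ≥ a * n + M * Real.sqrt n) ∧ |walkSum X n ω| ≤ K}).toReal) atTop)
      atTop (nhds 0) :=
  big_jump_concentration_general μ X hiid a ha hmean hvar β hβ sv hsv htail hloc b hb K δ hδ0 hδ1
end
end
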